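/- Let n ≥ 2 and let L : ℝⁿ × ℝⁿ → ℝ be positively homogeneous of degree 1 in the second variable (L(x, t·v) = t·L(x,v) for all t > 0) and twice continuously differentiable on {(x,v) : v ≠ 0}. Suppose that for every x ∈ ℝⁿ and every v ≠ 0: (i) all second partial derivatives ∂²L/∂v_j∂v_i(x,v) vanish, and (ii) ∂²L/∂x_j∂v_i(x,v) = ∂²L/∂x_i∂v_j(x,v) for all i, j. Then there exists a continuously differentiable map b = (b₁,…,b_n) : ℝⁿ → ℝⁿ such that L(x,v) = Σ_i b_i(x)·v_i for all x ∈ ℝⁿ and all v ≠ 0, and ∂b_i/∂x_j = ∂b_j/∂x_i everywhere, i.e., L is a closed differential 1-form on ℝⁿ. -/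

import Mathlib

/-!
Restricted to a ray, positive homogeneity gives Euler's identity `L(x, v) = ∂_v L(x, v) · v`.
By (i) each `∂L/∂v_i` has zero `v`-derivative, so it is constant in `v` on `ℝⁿ ∖ {0}`, which is
connected because `n ≥ 2`; its value is `b_i(x)`. Euler's identity then reads
`L(x, v) = Σ b_i(x) v_i`, and (ii) is the symmetry of `∂b_i/∂x_j`.
-/

open ContinuousLinearMap Filter Topology

section

variable {E V F : Type*} [NormedAddCommGroup E] [NormedSpace ℝ E] [NormedAddCommGroup V]
  [NormedSpace ℝ V] [NormedAddCommGroup F] [NormedSpace ℝ F]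

theorem DifferentiableAt.hasFDerivAt_comp_prodMk_left {f : E × V → F} {x : E} {w : V}
    (hf : DifferentiableAt ℝ f (x, w)) :
    HasFDerivAt (fun y => f (y, w)) ((fderiv ℝ f (x, w)).comp (inl ℝ E V)) x :=
  hf.hasFDerivAt.comp x (hasFDerivAt_prodMk_left x w)

theorem DifferentiableAt.hasFDerivAt_comp_prodMk_right {f : E × V → F} {x : E} {w : V}
    (hf : DifferentiableAt ℝ f (x, w)) :
    HasFDerivAt (fun v => f (x, v)) ((fderiv ℝ f (x, w)).comp (inr ℝ E V)) w :=
  hf.hasFDerivAt.comp w (hasFDerivAt_prodMk_right x w)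

theorem fderiv_apply_self_of_pos_homogeneous {g : V → F} {v : V}
    (hg : ∀ t : ℝ, 0 < t → g (t • v) = t • g v) (hd : DifferentiableAt ℝ g v) :
    fderiv ℝ g v v = g v := by
  have hray : HasDerivAt (fun t : ℝ => g (t • v)) (fderiv ℝ g v v) 1 := by
    have hsmul : HasDerivAt (fun t : ℝ => t • v) v 1 := by
      simpa using (hasDerivAt_id (1 : ℝ)).smul_const v
    exact hd.hasFDerivAt.comp_hasDerivAt_of_eq 1 hsmul (one_smul ℝ v).symm
  have hscale : (fun t : ℝ => g (t • v)) =ᶠ[𝓝 1] fun t => t • g v :=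
    eventually_of_mem (Ioi_mem_nhds one_pos) hg
  exact (hray.congr_of_eventuallyEq hscale.symm).unique
    (by simpa using (hasDerivAt_id (1 : ℝ)).smul_const (g v))

theorem fderiv_apply_inr_self_of_pos_homogeneous {L : E × V → F} {x : E} {v : V}
    (hL : ∀ t : ℝ, 0 < t → L (x, t • v) = t • L (x, v)) (hd : DifferentiableAt ℝ L (x, v)) :
    fderiv ℝ L (x, v) (0, v) = L (x, v) := by
  have hslice := hd.hasFDerivAt_comp_prodMk_right
  simpa [hslice.fderiv] using fderiv_apply_self_of_pos_homogeneous hL hslice.differentiableAt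

theorem eq_of_fderiv_comp_inr_eq_zero {f : E × V → F} {x : E} {s : Set V} (hs : IsOpen s)
    (hs' : IsPreconnected s) (hf : ∀ w ∈ s, DifferentiableAt ℝ f (x, w))
    (hf' : ∀ w ∈ s, (fderiv ℝ f (x, w)).comp (inr ℝ E V) = 0) {w₁ w₂ : V}
    (h₁ : w₁ ∈ s) (h₂ : w₂ ∈ s) : f (x, w₁) = f (x, w₂) := by
  have hslice := fun w hw => (hf w hw).hasFDerivAt_comp_prodMk_right
  exact hs.is_const_of_fderiv_eq_zero (f := fun w => f (x, w)) hs'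
    (fun w hw => (hslice w hw).differentiableAt.differentiableWithinAt)
    (fun w hw => (hslice w hw).fderiv.trans (hf' w hw)) h₁ h₂

theorem ContinuousLinearMap.apply_eq_sum_pi_single {ι : Type*} [Fintype ι] [DecidableEq ι]
    (φ : (ι → ℝ) →L[ℝ] F) (w : ι → ℝ) : φ w = ∑ j, w j • φ (Pi.single j 1) := by
  conv_lhs => rw [pi_eq_sum_univ' w]
  simp only [map_sum, map_smul]

end

theorem statement12 (n : ℕ) (hn : 2 ≤ n)
    (L : (Fin n → ℝ) × (Fin n → ℝ) → ℝ)
    (hhom : ∀ (x v : Fin n → ℝ) (t : ℝ), 0 < t → L (x, t • v) = t * L (x, v))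
    (hC2 : ContDiffOn ℝ 2 L {p : (Fin n → ℝ) × (Fin n → ℝ) | p.2 ≠ 0})
    (hvv : ∀ (x v : Fin n → ℝ), v ≠ 0 → ∀ i j : Fin n,
      fderiv ℝ (fun q => fderiv ℝ L q ((0 : Fin n → ℝ), Pi.single i 1)) (x, v)
        ((0 : Fin n → ℝ), Pi.single j 1) = 0)
    (hxv : ∀ (x v : Fin n → ℝ), v ≠ 0 → ∀ i j : Fin n,
      fderiv ℝ (fun q => fderiv ℝ L q ((0 : Fin n → ℝ), Pi.single i 1)) (x, v)
        (Pi.single j 1, (0 : Fin n → ℝ)) =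
      fderiv ℝ (fun q => fderiv ℝ L q ((0 : Fin n → ℝ), Pi.single j 1)) (x, v)
        (Pi.single i 1, (0 : Fin n → ℝ))) :
    ∃ b : (Fin n → ℝ) → (Fin n → ℝ),
      ContDiff ℝ 1 b ∧
      (∀ (x v : Fin n → ℝ), v ≠ 0 → L (x, v) = ∑ i, b x i * v i) ∧
      (∀ (x : Fin n → ℝ) (i j : Fin n),
        fderiv ℝ (fun y => b y i) x (Pi.single j 1) =
        fderiv ℝ (fun y => b y j) x (Pi.single i 1)) := by
  have hU : IsOpen {p : (Fin n → ℝ) × (Fin n → ℝ) | p.2 ≠ 0} :=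
    isOpen_compl_singleton.preimage continuous_snd
  set G : Fin n → (Fin n → ℝ) × (Fin n → ℝ) → ℝ := fun i q => fderiv ℝ L q (0, Pi.single i 1)
  have hG : ∀ i (x v : Fin n → ℝ), v ≠ 0 → ContDiffAt ℝ 1 (G i) (x, v) := fun i x v hv =>
    ((hC2.contDiffAt (hU.mem_nhds hv)).fderiv_right one_add_one_eq_two.le).clm_apply
      contDiffAt_const
  have hconn : IsPreconnected ({0}ᶜ : Set (Fin n → ℝ)) :=
    (isConnected_compl_singleton_of_one_lt_rank (by simp; omega) 0).isPreconnected
  set v₀ : Fin n → ℝ := fun _ => 1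
  have hv₀ : v₀ ≠ 0 := fun h => by simpa [v₀] using congrFun h ⟨0, by omega⟩
  have hGconst : ∀ x i (v : Fin n → ℝ), v ≠ 0 → G i (x, v) = G i (x, v₀) := by
    intro x i v hv
    refine eq_of_fderiv_comp_inr_eq_zero isOpen_compl_singleton hconn
      (fun w hw => (hG i x w hw).differentiableAt one_ne_zero) (fun w hw => ?_) hv hv₀
    ext1 u
    rw [apply_eq_sum_pi_single]
    simp [G, hvv x w hw i]
  refine ⟨fun x i => G i (x, v₀), ?_, fun x v hv => ?_, fun x i j => ?_⟩
  · exact contDiff_pi.2 fun i => contDiff_iff_contDiffAt.2 fun x =>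
      (hG i x v₀ hv₀).comp x (contDiffAt_id.prodMk contDiffAt_const)
  · have hd : DifferentiableAt ℝ L (x, v) :=
      (hC2.contDiffAt (hU.mem_nhds hv)).differentiableAt two_ne_zero
    calc L (x, v) = fderiv ℝ L (x, v) (0, v) :=
          (fderiv_apply_inr_self_of_pos_homogeneous (hhom x v) hd).symm
      _ = ∑ j, v j * G j (x, v) := apply_eq_sum_pi_single ((fderiv ℝ L (x, v)).comp (inr ..)) v
      _ = ∑ j, G j (x, v₀) * v j := by simp_rw [hGconst x _ v hv, mul_comm]
  · have hslice k := ((hG k x v₀ hv₀).differentiableAt one_ne_zero).hasFDerivAt_comp_prodMk_left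
    simpa [(hslice i).fderiv, (hslice j).fderiv] using hxv x v₀ hv₀ i j
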